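/- Under the random matrix model with separable variance profile, for every integer p ≥ 1 there exists a nice constant K̃_p such that for every n, every deterministic u ∈ ℂ^N and every z ∈ ℂ∖ℝ₊: E( Σ_{j=1}^n E_{j−1}( u* Q_n(z) η_j η_j* Q_n(z)* u ) )^p ≤ K̃_p · |z|^p · ‖u‖^{2p} / δ_z^{2p}, where η_j is the j-th column of Σ_n. -/

import Mathlib

open MeasureTheory ProbabilityTheory Matrix Complex

noncomputable section

/-- The closed nonnegative real half-axis `ℝ₊` viewed inside `ℂ`. -/
def nonnegReal : Set ℂ := {w : ℂ | ∃ x : ℝ, 0 ≤ x ∧ w = (x : ℂ)}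

/-- `δ_z`, the distance from `z` to `ℝ₊`. -/
def deltaz (z : ℂ) : ℝ := Metric.infDist z nonnegReal

/-- Euclidean norm of a complex vector. -/
def vecNorm {N : ℕ} (u : Fin N → ℂ) : ℝ := Real.sqrt (∑ i, ‖u i‖ ^ 2)

/-- Spectral (ℓ²-operator) norm of a rectangular complex matrix. -/
def specNorm {m n : ℕ} (M : Matrix (Fin m) (Fin n) ℂ) : ℝ :=
  ‖LinearMap.toContinuousLinearMap (Matrix.toEuclideanLin M)‖

/-- The sesquilinear form `u* M v`. -/
def bform {N : ℕ} (u : Fin N → ℂ) (M : Matrix (Fin N) (Fin N) ℂ) (v : Fin N → ℂ) : ℂ :=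
  star u ⬝ᵥ (M *ᵥ v)

/-- `Y = n^{-1/2} D^{1/2} X D̃^{1/2}` (entrywise). -/
def Ymat {N n : ℕ} (d : Fin N → ℝ) (dt : Fin n → ℝ) (X : Matrix (Fin N) (Fin n) ℂ) :
    Matrix (Fin N) (Fin n) ℂ :=
  Matrix.of fun i j =>
    ((Real.sqrt (d i) * Real.sqrt (dt j) / Real.sqrt (n : ℝ) : ℝ) : ℂ) * X i j

/-- The resolvent `Q(z) = (S S* − z I)⁻¹`. -/
def Qmat {N n : ℕ} (S : Matrix (Fin N) (Fin n) ℂ) (z : ℂ) : Matrix (Fin N) (Fin N) ℂ :=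
  (S * Sᴴ - z • (1 : Matrix (Fin N) (Fin N) ℂ))⁻¹

/-- The co-resolvent `Q̃(z) = (S* S − z I)⁻¹`. -/
def Qtmat {N n : ℕ} (S : Matrix (Fin N) (Fin n) ℂ) (z : ℂ) : Matrix (Fin n) (Fin n) ℂ :=
  (Sᴴ * S - z • (1 : Matrix (Fin n) (Fin n) ℂ))⁻¹

/-- The resolvent with column `j` deleted, `Q_j(z) = (S S* − η_j η_j* − z I)⁻¹`,
using `Σ_j Σ_j* = Σ Σ* − η_j η_j*`. -/
def Qjmat {N n : ℕ} (S : Matrix (Fin N) (Fin n) ℂ) (j : Fin n) (z : ℂ) :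
    Matrix (Fin N) (Fin N) ℂ :=
  (S * Sᴴ - Matrix.vecMulVec (fun i => S i j) (fun i => starRingEnd ℂ (S i j)) -
    z • (1 : Matrix (Fin N) (Fin N) ℂ))⁻¹

/-- `f` is, on `ℂ ∖ ℝ₊`, the Stieltjes transform of a finite nonnegative measure
supported in `ℝ₊`. -/
def IsStieltjesNonneg (f : ℂ → ℂ) : Prop :=
  ∃ μ : Measure ℝ, IsFiniteMeasure μ ∧ μ {t : ℝ | t < 0} = 0 ∧
    ∀ z : ℂ, z ∉ nonnegReal → f z = ∫ t : ℝ, ((t : ℂ) - z)⁻¹ ∂μ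

/-- The deterministic-equivalent matrix `T(z)` built from a pair `(δ, δ̃)`. -/
def Tmat {N n : ℕ} (d : Fin N → ℝ) (dt : Fin n → ℝ) (A : Matrix (Fin N) (Fin n) ℂ)
    (δ δt : ℂ) (z : ℂ) : Matrix (Fin N) (Fin N) ℂ :=
  (-(z • ((1 : Matrix (Fin N) (Fin N) ℂ) + δt • Matrix.diagonal fun i => (d i : ℂ))) +
      A * ((1 : Matrix (Fin n) (Fin n) ℂ) + δ • Matrix.diagonal fun j => (dt j : ℂ))⁻¹ * Aᴴ)⁻¹

/-- The co- deterministic-equivalent matrix `T̃(z)`. -/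
def Ttmat {N n : ℕ} (d : Fin N → ℝ) (dt : Fin n → ℝ) (A : Matrix (Fin N) (Fin n) ℂ)
    (δ δt : ℂ) (z : ℂ) : Matrix (Fin n) (Fin n) ℂ :=
  (-(z • ((1 : Matrix (Fin n) (Fin n) ℂ) + δ • Matrix.diagonal fun j => (dt j : ℂ))) +
      Aᴴ * ((1 : Matrix (Fin N) (Fin N) ℂ) + δt • Matrix.diagonal fun i => (d i : ℂ))⁻¹ * A)⁻¹

/-- Entrywise expectation of the resolvent. -/
def EQmat {Ω : Type} [MeasurableSpace Ω] (P : Measure Ω) {N n : ℕ}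
    (S : Ω → Matrix (Fin N) (Fin n) ℂ) (z : ℂ) : Matrix (Fin N) (Fin N) ℂ :=
  Matrix.of fun i k => ∫ ω, Qmat (S ω) z i k ∂P

/-- Entrywise expectation of the co-resolvent. -/
def EQtmat {Ω : Type} [MeasurableSpace Ω] (P : Measure Ω) {N n : ℕ}
    (S : Ω → Matrix (Fin N) (Fin n) ℂ) (z : ℂ) : Matrix (Fin n) (Fin n) ℂ :=
  Matrix.of fun j k => ∫ ω, Qtmat (S ω) z j k ∂P

/-- `α_n(z) = n⁻¹ Tr D 𝔼Q(z)`. -/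
def alphaE {Ω : Type} [MeasurableSpace Ω] (P : Measure Ω) {N n : ℕ}
    (d : Fin N → ℝ) (S : Ω → Matrix (Fin N) (Fin n) ℂ) (z : ℂ) : ℂ :=
  (n : ℂ)⁻¹ * Matrix.trace (Matrix.diagonal (fun i => (d i : ℂ)) * EQmat P S z)

/-- `α̃_n(z) = n⁻¹ Tr D̃ 𝔼Q̃(z)`. -/
def alphatE {Ω : Type} [MeasurableSpace Ω] (P : Measure Ω) {N n : ℕ}
    (dt : Fin n → ℝ) (S : Ω → Matrix (Fin N) (Fin n) ℂ) (z : ℂ) : ℂ :=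
  (n : ℂ)⁻¹ * Matrix.trace (Matrix.diagonal (fun j => (dt j : ℂ)) * EQtmat P S z)

/-- The intermediate deterministic matrix `R(z)`. -/
def Rmat {Ω : Type} [MeasurableSpace Ω] (P : Measure Ω) {N n : ℕ}
    (d : Fin N → ℝ) (dt : Fin n → ℝ) (A : Matrix (Fin N) (Fin n) ℂ)
    (S : Ω → Matrix (Fin N) (Fin n) ℂ) (z : ℂ) : Matrix (Fin N) (Fin N) ℂ :=
  Tmat d dt A (alphaE P d S z) (alphatE P dt S z) z

/-- The intermediate deterministic matrix `R̃(z)`. -/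
def Rtmat {Ω : Type} [MeasurableSpace Ω] (P : Measure Ω) {N n : ℕ}
    (d : Fin N → ℝ) (dt : Fin n → ℝ) (A : Matrix (Fin N) (Fin n) ℂ)
    (S : Ω → Matrix (Fin N) (Fin n) ℂ) (z : ℂ) : Matrix (Fin n) (Fin n) ℂ :=
  Ttmat d dt A (alphaE P d S z) (alphatE P dt S z) z

/-- The σ-field generated by the first `k` columns `y_0, …, y_{k-1}` of `Y`. -/
def colSigma {Ω : Type} [MeasurableSpace Ω] {N n : ℕ}
    (Y : Ω → Matrix (Fin N) (Fin n) ℂ) (k : ℕ) : MeasurableSpace Ω :=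
  ⨆ ℓ : Fin n, ⨆ _ : (ℓ : ℕ) < k, MeasurableSpace.comap (fun ω => fun i => Y ω i ℓ) inferInstance

/-- The σ-field generated by the columns `(y_ℓ, ℓ ≠ j)` of `Y`. -/
def colSigmaNe {Ω : Type} [MeasurableSpace Ω] {N n : ℕ}
    (Y : Ω → Matrix (Fin N) (Fin n) ℂ) (j : Fin n) : MeasurableSpace Ω :=
  ⨆ ℓ : Fin n, ⨆ _ : ℓ ≠ j, MeasurableSpace.comap (fun ω => fun i => Y ω i ℓ) inferInstance


lemma nonnegReal_eq : nonnegReal = Complex.re ⁻¹' Set.Ici 0 ∩ Complex.im ⁻¹' {0} := by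
  ext w
  constructor
  · rintro ⟨x, hx, rfl⟩
    simp [hx]
  · rintro ⟨h1, h2⟩
    exact ⟨w.re, h1, by
      simp only [Set.mem_preimage, Set.mem_singleton_iff] at h2
      exact (Complex.ext (by simp) (by simp [h2])) ⟩

lemma isClosed_nonnegReal : IsClosed nonnegReal := by
  rw [nonnegReal_eq]
  exact (isClosed_Ici.preimage Complex.continuous_re).inter
    (isClosed_singleton.preimage Complex.continuous_im)

lemma zero_mem_nonnegReal : (0 : ℂ) ∈ nonnegReal := ⟨0, le_refl 0, by simp⟩

lemma deltaz_pos {z : ℂ} (hz : z ∉ nonnegReal) : 0 < deltaz z :=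
  (isClosed_nonnegReal.notMem_iff_infDist_pos ⟨0, zero_mem_nonnegReal⟩).mp hz

lemma deltaz_le_abs (z : ℂ) : deltaz z ≤ ‖z‖ := by
  have := Metric.infDist_le_dist_of_mem (zero_mem_nonnegReal) (x := z)
  simpa [deltaz, dist_eq, Complex.norm_def] using this

lemma deltaz_mul_le {z : ℂ} (t s : ℝ) (ht : 0 ≤ t) (hs : 0 ≤ s) :
    deltaz z * s ≤ ‖(t : ℂ) - z * s‖ := by
  rcases eq_or_lt_of_le hs with h | h
  · simp [← h]
  · have hmem : ((t / s : ℝ) : ℂ) ∈ nonnegReal := ⟨t / s, div_nonneg ht hs, rfl⟩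
    have h1 : deltaz z ≤ ‖((t / s : ℝ) : ℂ) - z‖ := by
      have := Metric.infDist_le_dist_of_mem hmem (x := z)
      rw [Complex.dist_eq] at this
      rwa [show ‖((t / s : ℝ) : ℂ) - z‖ = ‖z - ((t / s : ℝ) : ℂ)‖ from
        by rw [norm_sub_rev]]
    calc deltaz z * s ≤ ‖((t / s : ℝ) : ℂ) - z‖ * s := by
          exact mul_le_mul_of_nonneg_right h1 hs
      _ = ‖(((t / s : ℝ) : ℂ) - z) * (s : ℂ)‖ := by
          rw [norm_mul]; simp [_root_.abs_of_nonneg hs]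
      _ = ‖(t : ℂ) - z * s‖ := by
          congr 1
          have hs' : (s : ℂ) ≠ 0 := by exact_mod_cast ne_of_gt h
          push_cast
          rw [sub_mul, div_mul_cancel₀ _ hs']

lemma deltaz_mul_le' {z : ℂ} (t s : ℝ) (ht : 0 ≤ t) (hs : 0 ≤ s) :
    deltaz z * s ≤ ‖(t : ℂ) - (starRingEnd ℂ z) * s‖ := by
  have : ((t : ℂ) - (starRingEnd ℂ z) * s) = starRingEnd ℂ ((t : ℂ) - z * s) := by
    simp only [map_sub, _root_.map_mul, Complex.conj_ofReal]
  rw [this, Complex.norm_conj]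
  exact deltaz_mul_le t s ht hs

-- a^(m+1) - b^(m+1) ≤ (m+1) a^m (a-b) for 0 ≤ b ≤ a
lemma pow_sub_pow_le (a b : ℝ) (hb : 0 ≤ b) (hab : b ≤ a) (m : ℕ) :
    a ^ (m + 1) - b ^ (m + 1) ≤ (m + 1 : ℝ) * a ^ m * (a - b) := by
  induction m with
  | zero => simp
  | succ m ih =>
      have ha : 0 ≤ a := hb.trans hab
      have hbm : b ^ (m+1) ≤ a ^ (m+1) := pow_le_pow_left₀ hb hab _
      have key : a ^ (m + 2) - b ^ (m + 2) =
          a * (a ^ (m+1) - b ^ (m+1)) + (a - b) * b ^ (m+1) := by ring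
      rw [key]
      have h1 : a * (a ^ (m+1) - b ^ (m+1)) ≤ a * ((m + 1 : ℝ) * a ^ m * (a - b)) :=
        mul_le_mul_of_nonneg_left ih ha
      have h2 : (a - b) * b ^ (m+1) ≤ (a - b) * a ^ (m+1) :=
        mul_le_mul_of_nonneg_left hbm (by linarith)
      calc a * (a ^ (m+1) - b ^ (m+1)) + (a - b) * b ^ (m+1)
          ≤ a * ((m + 1 : ℝ) * a ^ m * (a - b)) + (a - b) * a ^ (m+1) := by linarith
        _ = ((m+1 : ℕ) + 1 : ℝ) * a ^ (m+1) * (a - b) := by push_cast; ring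

lemma telescope_bound (G : ℕ → ℝ) (hG : ∀ i, 0 ≤ G i) (q : ℕ) (n : ℕ) :
    (∑ i ∈ Finset.range n, G i) ^ (q + 1) ≤
      (q + 1 : ℝ) * ∑ k ∈ Finset.range n, (∑ i ∈ Finset.range (k + 1), G i) ^ q * G k := by
  induction n with
  | zero => simp
  | succ n ih =>
      have hS : ∀ m, 0 ≤ ∑ i ∈ Finset.range m, G i :=
        fun m => Finset.sum_nonneg fun i _ => hG i
      have hstep : (∑ i ∈ Finset.range (n+1), G i) ^ (q+1) -
          (∑ i ∈ Finset.range n, G i) ^ (q+1) ≤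
          (q + 1 : ℝ) * (∑ i ∈ Finset.range (n+1), G i) ^ q * G n := by
        have := pow_sub_pow_le (∑ i ∈ Finset.range (n+1), G i)
          (∑ i ∈ Finset.range n, G i) (hS n)
          (by rw [Finset.sum_range_succ]; linarith [hG n]) q
        calc (∑ i ∈ Finset.range (n+1), G i) ^ (q+1) -
            (∑ i ∈ Finset.range n, G i) ^ (q+1)
            ≤ (q + 1 : ℝ) * (∑ i ∈ Finset.range (n+1), G i) ^ q *
              ((∑ i ∈ Finset.range (n+1), G i) - ∑ i ∈ Finset.range n, G i) := this
          _ = (q + 1 : ℝ) * (∑ i ∈ Finset.range (n+1), G i) ^ q * G n := by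
              rw [Finset.sum_range_succ]; ring_nf
      rw [Finset.sum_range_succ (fun k => (∑ i ∈ Finset.range (k + 1), G i) ^ q * G k) n,
        mul_add]
      linarith


lemma star_dot_self {N : ℕ} (v : Fin N → ℂ) :
    star v ⬝ᵥ v = ((∑ i, ‖v i‖ ^ 2 : ℝ) : ℂ) := by
  push_cast
  simp only [dotProduct, Pi.star_apply, Complex.star_def]
  refine Finset.sum_congr rfl fun i _ => ?_
  rw [mul_comm, Complex.mul_conj']

/-- numerical range identity for `H = S Sᴴ`. -/
lemma numrange {N n : ℕ} (S : Matrix (Fin N) (Fin n) ℂ) (v : Fin N → ℂ) :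
    star v ⬝ᵥ ((S * Sᴴ) *ᵥ v) = ((∑ j, ‖(Sᴴ *ᵥ v) j‖ ^ 2 : ℝ) : ℂ) := by
  have h1 : star v ᵥ* S = star (Sᴴ *ᵥ v) := by
    rw [Matrix.star_mulVec, conjTranspose_conjTranspose]
  calc star v ⬝ᵥ ((S * Sᴴ) *ᵥ v) = star v ⬝ᵥ (S *ᵥ (Sᴴ *ᵥ v)) := by
        rw [Matrix.mulVec_mulVec]
    _ = (star v ᵥ* S) ⬝ᵥ (Sᴴ *ᵥ v) := by rw [Matrix.dotProduct_mulVec]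
    _ = star (Sᴴ *ᵥ v) ⬝ᵥ (Sᴴ *ᵥ v) := by rw [h1]
    _ = ((∑ j, ‖(Sᴴ *ᵥ v) j‖ ^ 2 : ℝ) : ℂ) := star_dot_self _

lemma cauchy_schwarz_dot {N : ℕ} (w u : Fin N → ℂ) :
    ‖star w ⬝ᵥ u‖ ≤ vecNorm w * vecNorm u := by
  let w2 : EuclideanSpace ℂ (Fin N) := WithLp.toLp 2 w
  let u2 : EuclideanSpace ℂ (Fin N) := WithLp.toLp 2 u
  have h1 : star w ⬝ᵥ u = @inner ℂ _ _ w2 u2 := by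
    simp [dotProduct, w2, u2, PiLp.inner_apply, mul_comm]
  have h2 : vecNorm w = ‖w2‖ := by rw [EuclideanSpace.norm_eq]; rfl
  have h3 : vecNorm u = ‖u2‖ := by rw [EuclideanSpace.norm_eq]; rfl
  rw [h1, h2, h3]
  exact norm_inner_le_norm w2 u2

set_option maxHeartbeats 1000000 in
lemma key_bound {N n : ℕ} (S : Matrix (Fin N) (Fin n) ℂ) (u : Fin N → ℂ) (z : ℂ)
    (hz : z ∉ nonnegReal) :
    ∑ j : Fin n, ‖bform u (Qmat S z) (fun i => S i j)‖ ^ 2 ≤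
      2 * ‖z‖ * vecNorm u ^ 2 / deltaz z ^ 2 := by
  set δ := deltaz z with hδdef
  have hδ : 0 < δ := deltaz_pos hz
  set H := S * Sᴴ with hHdef
  set M' := H - (starRingEnd ℂ z) • (1 : Matrix (Fin N) (Fin N) ℂ) with hM'def
  have hnum : ∀ v : Fin N → ℂ, star v ⬝ᵥ (M' *ᵥ v) =
      ((∑ j, ‖(Sᴴ *ᵥ v) j‖ ^ 2 : ℝ) : ℂ) - (starRingEnd ℂ z) * ((∑ i, ‖v i‖ ^ 2 : ℝ) : ℂ) := by
    intro v
    rw [hM'def, Matrix.sub_mulVec, dotProduct_sub, numrange, smul_mulVec,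
      Matrix.one_mulVec, dotProduct_smul, star_dot_self, smul_eq_mul]
  have hlow : ∀ v : Fin N → ℂ,
      δ * (∑ i, ‖v i‖ ^ 2) ≤ ‖star v ⬝ᵥ (M' *ᵥ v)‖ := by
    intro v
    rw [hnum v]
    exact deltaz_mul_le' _ _ (Finset.sum_nonneg fun j _ => sq_nonneg _)
      (Finset.sum_nonneg fun i _ => sq_nonneg _)
  have hdet : M'.det ≠ 0 := by
    intro hd
    obtain ⟨v, hv0, hv⟩ := (Matrix.exists_mulVec_eq_zero_iff).mpr hd
    have h0 : ‖star v ⬝ᵥ (M' *ᵥ v)‖ = 0 := by rw [hv]; simp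
    have hvpos : 0 < ∑ i, ‖v i‖ ^ 2 := by
      obtain ⟨i, hi⟩ := Function.ne_iff.mp hv0
      have hp : 0 < ‖v i‖ ^ 2 := pow_pos (norm_pos_iff.mpr hi) 2
      calc (0:ℝ) < ‖v i‖ ^ 2 := hp
        _ ≤ ∑ i, ‖v i‖ ^ 2 := Finset.single_le_sum
            (fun i _ => sq_nonneg ‖v i‖) (Finset.mem_univ i)
    have hl := hlow v
    rw [h0] at hl
    nlinarith
  have hunit : IsUnit M'.det := isUnit_iff_ne_zero.mpr hdet
  set w : Fin N → ℂ := M'⁻¹ *ᵥ u with hwdef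
  have hMw : M' *ᵥ w = u := by
    rw [hwdef, Matrix.mulVec_mulVec, Matrix.mul_nonsing_inv _ hunit, Matrix.one_mulVec]
  have hQ : Qmat S z = (M'⁻¹)ᴴ := by
    rw [Qmat, Matrix.conjTranspose_nonsing_inv]
    congr 1
    rw [hM'def, conjTranspose_sub, conjTranspose_smul, conjTranspose_one,
      hHdef, conjTranspose_mul, conjTranspose_conjTranspose]
    simp [Complex.star_def]
  have hc : ∀ j : Fin n, bform u (Qmat S z) (fun i => S i j) =
      starRingEnd ℂ ((Sᴴ *ᵥ w) j) := by
    intro j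
    rw [bform, hQ, Matrix.dotProduct_mulVec]
    have h1 : star u ᵥ* (M'⁻¹)ᴴ = star w := by
      rw [hwdef, ← Matrix.star_mulVec]
    rw [h1]
    simp only [dotProduct, Pi.star_apply, Matrix.mulVec, Matrix.conjTranspose_apply,
      map_sum, _root_.map_mul, Complex.star_def, RingHomCompTriple.comp_apply,
      Complex.conj_conj, RingHom.id_apply, mul_comm]
  set t : ℝ := ∑ j, ‖(Sᴴ *ᵥ w) j‖ ^ 2 with htdef
  set s : ℝ := ∑ i, ‖w i‖ ^ 2 with hsdef
  have hts : 0 ≤ t := Finset.sum_nonneg fun j _ => sq_nonneg _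
  have hss : 0 ≤ s := Finset.sum_nonneg fun i _ => sq_nonneg _
  have hLHS : ∑ j : Fin n, ‖bform u (Qmat S z) (fun i => S i j)‖ ^ 2 = t := by
    rw [htdef]
    refine Finset.sum_congr rfl fun j _ => ?_
    rw [hc j]
    simp [Complex.norm_conj]
  rw [hLHS]
  have hid : (t : ℂ) = star w ⬝ᵥ u + (starRingEnd ℂ z) * (s : ℂ) := by
    have h1 : star w ⬝ᵥ (M' *ᵥ w) = star w ⬝ᵥ u := by rw [hMw]
    rw [hnum w] at h1
    rw [← htdef, ← hsdef] at h1
    linear_combination h1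
  have hVw : vecNorm w = Real.sqrt s := by rw [vecNorm, hsdef]
  set V := vecNorm u with hVdef
  have hV : 0 ≤ V := Real.sqrt_nonneg _
  have hCS : ‖star w ⬝ᵥ u‖ ≤ Real.sqrt s * V := by
    have hcs := cauchy_schwarz_dot w u
    rwa [hVw] at hcs
  have hsb : δ * s ≤ Real.sqrt s * V := by
    have h2 : δ * s ≤ ‖star w ⬝ᵥ (M' *ᵥ w)‖ := hlow w
    rw [hMw] at h2
    exact h2.trans hCS
  have hkey : δ * Real.sqrt s ≤ V := by
    rcases eq_or_lt_of_le (Real.sqrt_nonneg s) with h | h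
    · rw [← h]; simpa using hV
    · have h3 : δ * (Real.sqrt s * Real.sqrt s) ≤ Real.sqrt s * V := by
        rw [Real.mul_self_sqrt hss]; exact hsb
      nlinarith [h3, h]
  have h4 : Real.sqrt s * V ≤ V ^ 2 / δ := by
    have h5 : Real.sqrt s ≤ V / δ := by rw [le_div_iff₀ hδ]; linarith [hkey]
    calc Real.sqrt s * V ≤ (V / δ) * V := mul_le_mul_of_nonneg_right h5 hV
      _ = V ^ 2 / δ := by ring
  have hsb2 : s ≤ V ^ 2 / δ ^ 2 := by
    have h6 : (δ * Real.sqrt s) * (δ * Real.sqrt s) ≤ V * V :=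
      mul_le_mul hkey hkey (mul_nonneg hδ.le (Real.sqrt_nonneg s)) hV
    rw [le_div_iff₀ (pow_pos hδ 2)]
    nlinarith [h6, Real.mul_self_sqrt hss]
  have habs : t ≤ Real.sqrt s * V + ‖z‖ * s := by
    have h1 : t = ‖(t : ℂ)‖ := by
      rw [Complex.norm_real, Real.norm_eq_abs, _root_.abs_of_nonneg hts]
    rw [h1, hid]
    calc ‖star w ⬝ᵥ u + (starRingEnd ℂ z) * (s : ℂ)‖
        ≤ ‖star w ⬝ᵥ u‖ + ‖(starRingEnd ℂ z) * (s : ℂ)‖ :=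
          norm_add_le _ _
      _ ≤ Real.sqrt s * V + ‖z‖ * s := by
          have e1 : ‖(starRingEnd ℂ z) * (s : ℂ)‖ = ‖z‖ * s := by
            rw [norm_mul, Complex.norm_conj, Complex.norm_real, Real.norm_eq_abs,
              _root_.abs_of_nonneg hss]
          rw [e1]
          exact add_le_add hCS (le_refl _)
  have hδz : δ ≤ ‖z‖ := deltaz_le_abs z
  calc t ≤ Real.sqrt s * V + ‖z‖ * s := habs
    _ ≤ V ^ 2 / δ + ‖z‖ * (V ^ 2 / δ ^ 2) :=
        add_le_add h4 (mul_le_mul_of_nonneg_left hsb2 (norm_nonneg _))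
    _ = δ * (V ^ 2 / δ ^ 2) + ‖z‖ * (V ^ 2 / δ ^ 2) := by
        field_simp
    _ ≤ ‖z‖ * (V ^ 2 / δ ^ 2) + ‖z‖ * (V ^ 2 / δ ^ 2) := by
        have hnn : (0:ℝ) ≤ V ^ 2 / δ ^ 2 := div_nonneg (sq_nonneg V) (sq_nonneg δ)
        exact add_le_add (mul_le_mul_of_nonneg_right hδz hnn) (le_refl _)
    _ = 2 * ‖z‖ * V ^ 2 / δ ^ 2 := by ring


lemma measurable_det' {m : ℕ} {Ω : Type} [MeasurableSpace Ω] {B : Ω → Matrix (Fin m) (Fin m) ℂ}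
    (h : ∀ i j, Measurable fun ω => B ω i j) : Measurable fun ω => (B ω).det := by
  simp only [Matrix.det_apply]
  refine Finset.measurable_sum _ fun σ _ => ?_
  simp only [Units.smul_def, zsmul_eq_mul]
  exact measurable_const.mul (Finset.measurable_prod _ fun i _ => h _ _)

lemma measurable_inv_entry {m : ℕ} {Ω : Type} [MeasurableSpace Ω]
    {B : Ω → Matrix (Fin m) (Fin m) ℂ}
    (h : ∀ i j, Measurable fun ω => B ω i j) (i j : Fin m) :
    Measurable fun ω => (B ω)⁻¹ i j := by
  simp only [Matrix.inv_def, Matrix.smul_apply, smul_eq_mul, Ring.inverse_eq_inv]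
  refine Measurable.mul ((measurable_det' h).inv) ?_
  simp only [Matrix.adjugate_apply]
  refine measurable_det' fun a b => ?_
  by_cases hab : a = j
  · simp [Matrix.updateRow_apply, hab]
  · simpa [Matrix.updateRow_apply, hab] using h a b

lemma measurable_Qmat_entry {N n : ℕ} {Ω : Type} [MeasurableSpace Ω]
    {S : Ω → Matrix (Fin N) (Fin n) ℂ}
    (h : ∀ i j, Measurable fun ω => S ω i j) (z : ℂ) (i k : Fin N) :
    Measurable fun ω => Qmat (S ω) z i k := by
  refine measurable_inv_entry (fun a b => ?_) i k
  have h1 : (fun ω => (S ω * (S ω)ᴴ - z • (1 : Matrix (Fin N) (Fin N) ℂ)) a b) =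
      fun ω => (∑ c, S ω a c * starRingEnd ℂ (S ω b c)) - z * (1 : Matrix (Fin N) (Fin N) ℂ) a b := by
    funext ω
    simp [Matrix.sub_apply, Matrix.mul_apply, Matrix.conjTranspose_apply, Matrix.smul_apply,
      smul_eq_mul, Complex.star_def]
  rw [h1]
  refine Measurable.sub ?_ measurable_const
  exact Finset.measurable_sum _ fun c _ => (h a c).mul ((Complex.continuous_conj.measurable).comp (h b c))

lemma measurable_bform {N n : ℕ} {Ω : Type} [MeasurableSpace Ω]
    {S : Ω → Matrix (Fin N) (Fin n) ℂ}
    (h : ∀ i j, Measurable fun ω => S ω i j) (u : Fin N → ℂ) (z : ℂ) (j : Fin n) :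
    Measurable fun ω => ‖bform u (Qmat (S ω) z) (fun i => S ω i j)‖ ^ 2 := by
  refine Measurable.pow_const (Measurable.norm ?_) 2
  simp only [bform, dotProduct, Matrix.mulVec, Pi.star_apply]
  refine Finset.measurable_sum _ fun i _ => ?_
  refine Measurable.mul measurable_const ?_
  exact Finset.measurable_sum _ fun k _ =>
    (measurable_Qmat_entry h z i k).mul (h k j)


lemma garsia {Ω : Type} [m0 : MeasurableSpace Ω] (P : Measure Ω) [IsProbabilityMeasure P]
    {n : ℕ} (F : Fin n → MeasurableSpace Ω) (hFle : ∀ j, F j ≤ m0)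
    (hFmono : ∀ j k : Fin n, j ≤ k → F j ≤ F k)
    (f : Fin n → Ω → ℝ) (hfm : ∀ j, Measurable (f j))
    (hfnn : ∀ j ω, 0 ≤ f j ω) (C : ℝ) (hC : 0 ≤ C)
    (hsum : ∀ ω, ∑ j, f j ω ≤ C) (p : ℕ) :
    ∫ ω, (∑ j : Fin n, (P[f j | F j]) ω) ^ p ∂P ≤ (p.factorial : ℝ) * C ^ p := by
  have hfC : ∀ j ω, f j ω ≤ C := fun j ω =>
    le_trans (Finset.single_le_sum (fun i _ => hfnn i ω) (Finset.mem_univ j)) (hsum ω)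
  have hfi : ∀ j, Integrable (f j) P := by
    intro j
    refine (integrable_const C).mono' (hfm j).aestronglyMeasurable (ae_of_all _ fun ω => ?_)
    rw [Real.norm_eq_abs, _root_.abs_of_nonneg (hfnn j ω)]
    exact hfC j ω
  set g : Fin n → Ω → ℝ := fun j => P[f j | F j] with hgdef
  have hg01 : ∀ᵐ ω ∂P, ∀ j : Fin n, 0 ≤ g j ω ∧ g j ω ≤ C := by
    rw [ae_all_iff]
    intro j
    have h1 : 0 ≤ᵐ[P] g j := condExp_nonneg (ae_of_all _ (hfnn j))
    have h2 : g j ≤ᵐ[P] fun _ => C := by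
      have h3 : g j ≤ᵐ[P] P[(fun _ => C) | F j] :=
        condExp_mono (hfi j) (integrable_const C) (ae_of_all _ fun ω => hfC j ω)
      have h4 : P[(fun _ => C) | F j] = fun _ => C := condExp_const (hFle j) C
      rwa [h4] at h3
    filter_upwards [h1, h2] with ω hω1 hω2
    exact ⟨hω1, hω2⟩
  have hgm : ∀ j, Measurable[F j] (g j) := fun j => stronglyMeasurable_condExp.measurable
  have hgm0 : ∀ j, Measurable (g j) := fun j => (hgm j).mono (hFle j) le_rfl
  set G : ℕ → Ω → ℝ := fun k ω => if h : k < n then g ⟨k, h⟩ ω else 0 with hGdef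
  set φ : ℕ → Ω → ℝ := fun k ω => if h : k < n then f ⟨k, h⟩ ω else 0 with hφdef
  set A : ℕ → Ω → ℝ := fun k ω => ∑ i ∈ Finset.range k, G i ω with hAdef
  have hGm0 : ∀ k, Measurable (G k) := by
    intro k
    by_cases h : k < n
    · simpa [hGdef, dif_pos h] using hgm0 ⟨k, h⟩
    · simp [hGdef, dif_neg h]
  have hφm0 : ∀ k, Measurable (φ k) := by
    intro k
    by_cases h : k < n
    · simpa [hφdef, dif_pos h] using hfm ⟨k, h⟩
    · simp [hφdef, dif_neg h]
  have hφnn : ∀ k ω, 0 ≤ φ k ω := by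
    intro k ω
    by_cases h : k < n <;> simp [hφdef, h]
    exact hfnn _ ω
  have hφC : ∀ k ω, φ k ω ≤ C := by
    intro k ω
    by_cases h : k < n <;> simp [hφdef, h]
    exacts [hfC _ ω, hC]
  have hφsum : ∀ ω, ∑ k ∈ Finset.range n, φ k ω ≤ C := by
    intro ω
    have h1 : ∑ k ∈ Finset.range n, φ k ω = ∑ j : Fin n, f j ω := by
      rw [← Fin.sum_univ_eq_sum_range (fun k => φ k ω) n]
      exact Finset.sum_congr rfl fun j _ => by simp [hφdef, j.isLt]
    rw [h1]; exact hsum ω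
  have hAm0 : ∀ k, Measurable (A k) := fun k =>
    Finset.measurable_sum _ fun i _ => hGm0 i
  have hGae : ∀ᵐ ω ∂P, ∀ k : ℕ, 0 ≤ G k ω ∧ G k ω ≤ C := by
    filter_upwards [hg01] with ω hω
    intro k
    by_cases h : k < n
    · simpa [hGdef, dif_pos h] using hω ⟨k, h⟩
    · simp [hGdef, dif_neg h, hC]
  have hbint : ∀ (h : Ω → ℝ) (D : ℝ), Measurable h → (∀ᵐ ω ∂P, ‖h ω‖ ≤ D) →
      Integrable h P := fun h D hm hb => (integrable_const D).mono' hm.aestronglyMeasurable hb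
  have hAbd : ∀ᵐ ω ∂P, ∀ k : ℕ, 0 ≤ A k ω ∧ A k ω ≤ (n : ℝ) * C := by
    filter_upwards [hGae] with ω hω
    intro k
    refine ⟨Finset.sum_nonneg fun i _ => (hω i).1, ?_⟩
    have hAfil : A k ω = ∑ i ∈ (Finset.range k).filter (· < n), G i ω := by
      show (∑ i ∈ Finset.range k, G i ω) = _
      rw [← Finset.sum_filter_add_sum_filter_not (Finset.range k) (· < n) (G · ω)]
      have hz : ∑ i ∈ (Finset.range k).filter (fun i => ¬ i < n), G i ω = 0 := by
        refine Finset.sum_eq_zero fun i hi => ?_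
        simp only [Finset.mem_filter] at hi
        simp [hGdef, dif_neg hi.2]
      rw [hz, add_zero]
    rw [hAfil]
    calc (∑ i ∈ (Finset.range k).filter (· < n), G i ω)
        ≤ ∑ _i ∈ (Finset.range k).filter (· < n), C :=
          Finset.sum_le_sum fun i _ => (hω i).2
      _ ≤ (n : ℝ) * C := by
          rw [Finset.sum_const, nsmul_eq_mul]
          have hcard : ((Finset.range k).filter (· < n)).card ≤ n := by
            calc ((Finset.range k).filter (· < n)).card
                ≤ (Finset.range n).card := Finset.card_le_card (fun i hi => by
                  simp only [Finset.mem_filter, Finset.mem_range] at hi ⊢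
                  exact hi.2)
              _ = n := Finset.card_range n
          exact mul_le_mul_of_nonneg_right (by exact_mod_cast hcard) hC
  have hAmono : ∀ᵐ ω ∂P, ∀ k : ℕ, k ≤ n → A k ω ≤ A n ω := by
    filter_upwards [hGae] with ω hω
    intro k hk
    exact Finset.sum_le_sum_of_subset_of_nonneg
      (Finset.range_subset_range.mpr hk) (fun i _ _ => (hω i).1)
  have main : ∀ q : ℕ, ∫ ω, (A n ω) ^ q ∂P ≤ (q.factorial : ℝ) * C ^ q := by
    intro q
    induction q with
    | zero => simp
    | succ q ih =>
        have hAq_int : ∀ r : ℕ, Integrable (fun ω => (A n ω) ^ r) P := by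
          intro r
          refine hbint _ (((n : ℝ) * C) ^ r) ((hAm0 n).pow_const r) ?_
          filter_upwards [hAbd] with ω hω
          rw [Real.norm_eq_abs, _root_.abs_of_nonneg (pow_nonneg (hω n).1 r)]
          exact pow_le_pow_left₀ (hω n).1 (hω n).2 r
        have hprodf_int : ∀ (k : ℕ) (j : Fin n), Integrable (fun ω => (A k ω) ^ q * f j ω) P := by
          intro k j
          refine hbint _ (((n : ℝ) * C) ^ q * C)
            (((hAm0 k).pow_const q).mul (hfm j)) ?_
          filter_upwards [hAbd] with ω hω
          rw [Real.norm_eq_abs,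
            _root_.abs_of_nonneg (mul_nonneg (pow_nonneg (hω k).1 q) (hfnn j ω))]
          exact mul_le_mul (pow_le_pow_left₀ (hω k).1 (hω k).2 q) (hfC j ω) (hfnn j ω)
            (by positivity)
        have hprodG_int : ∀ k : ℕ, Integrable (fun ω => (A (k+1) ω) ^ q * G k ω) P := by
          intro k
          refine hbint _ (((n : ℝ) * C) ^ q * C)
            (((hAm0 (k+1)).pow_const q).mul (hGm0 k)) ?_
          filter_upwards [hAbd, hGae] with ω hω hG
          rw [Real.norm_eq_abs,
            _root_.abs_of_nonneg (mul_nonneg (pow_nonneg (hω (k+1)).1 q) (hG k).1)]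
          exact mul_le_mul (pow_le_pow_left₀ (hω (k+1)).1 (hω (k+1)).2 q) (hG k).2 (hG k).1
            (by positivity)
        -- step 1: pointwise telescoping
        have step1 : ∫ ω, (A n ω) ^ (q+1) ∂P ≤
            (q+1 : ℝ) * ∑ k ∈ Finset.range n, ∫ ω, (A (k+1) ω) ^ q * G k ω ∂P := by
          have h1 : ∫ ω, (A n ω) ^ (q+1) ∂P ≤
              ∫ ω, (q+1 : ℝ) * ∑ k ∈ Finset.range n, (A (k+1) ω) ^ q * G k ω ∂P := by
            refine integral_mono_ae (hAq_int (q+1))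
              ((integrable_finset_sum _ fun k _ => hprodG_int k).const_mul _) ?_
            filter_upwards [hGae] with ω hω
            exact telescope_bound (fun i => G i ω) (fun i => (hω i).1) q n
          rw [integral_const_mul, integral_finset_sum _ fun k _ => hprodG_int k] at h1
          exact h1
        -- step 2: per-term conditional expectation identity
        have step2 : ∀ k (hk : k < n),
            ∫ ω, (A (k+1) ω) ^ q * G k ω ∂P ≤ ∫ ω, (A n ω) ^ q * f ⟨k, hk⟩ ω ∂P := by
          intro k hk
          haveI : IsFiniteMeasure (P.trim (hFle ⟨k, hk⟩)) := isFiniteMeasure_trim _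
          have hGk : ∀ ω, G k ω = g ⟨k, hk⟩ ω := fun ω => by simp [hGdef, dif_pos hk]
          have hAmeas : Measurable[F ⟨k, hk⟩] (fun ω => (A (k+1) ω) ^ q) := by
            refine Measurable.pow_const ?_ q
            refine Finset.measurable_sum _ fun i hi => ?_
            have hin : i < n := lt_of_lt_of_le (Finset.mem_range.mp hi) hk
            have hile : (⟨i, hin⟩ : Fin n) ≤ ⟨k, hk⟩ := by
              simp only [Fin.le_def]
              have := Finset.mem_range.mp hi
              omega
            have hmi : Measurable[F ⟨i, hin⟩] (G i) := by
              simpa [hGdef, dif_pos hin] using hgm ⟨i, hin⟩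
            exact hmi.mono (hFmono _ _ hile) le_rfl
          have hmul := condExp_mul_of_stronglyMeasurable_left (μ := P) (m := F ⟨k, hk⟩)
            hAmeas.stronglyMeasurable (hprodf_int (k+1) ⟨k, hk⟩) (hfi ⟨k, hk⟩)
          have e1 : ∫ ω, (A (k+1) ω) ^ q * G k ω ∂P =
              ∫ ω, (A (k+1) ω) ^ q * f ⟨k, hk⟩ ω ∂P := by
            calc ∫ ω, (A (k+1) ω) ^ q * G k ω ∂P
                = ∫ ω, (P[(fun ω' => (A (k+1) ω') ^ q * f ⟨k, hk⟩ ω') | F ⟨k, hk⟩]) ω ∂P := by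
                  refine integral_congr_ae ?_
                  filter_upwards [hmul] with ω hω
                  rw [hGk ω]
                  exact hω.symm
              _ = ∫ ω, (A (k+1) ω) ^ q * f ⟨k, hk⟩ ω ∂P := integral_condExp (hFle ⟨k, hk⟩)
          rw [e1]
          refine integral_mono_ae (hprodf_int (k+1) ⟨k, hk⟩) (hprodf_int n ⟨k, hk⟩) ?_
          filter_upwards [hAbd, hAmono] with ω hω hmono
          exact mul_le_mul_of_nonneg_right
            (pow_le_pow_left₀ (hω (k+1)).1 (hmono (k+1) (by omega)) q) (hfnn _ ω)
        -- step 3: sum the f's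
        have step3 : ∑ k ∈ Finset.range n, ∫ ω, (A n ω) ^ q * φ k ω ∂P ≤
            C * ∫ ω, (A n ω) ^ q ∂P := by
          have h1 : ∑ k ∈ Finset.range n, ∫ ω, (A n ω) ^ q * φ k ω ∂P =
              ∫ ω, ∑ k ∈ Finset.range n, (A n ω) ^ q * φ k ω ∂P := by
            rw [integral_finset_sum]
            intro k hk
            have hkn : k < n := Finset.mem_range.mp hk
            have : (fun ω => (A n ω) ^ q * φ k ω) = fun ω => (A n ω) ^ q * f ⟨k, hkn⟩ ω := by
              funext ω; simp [hφdef, dif_pos hkn]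
            rw [this]
            exact hprodf_int n ⟨k, hkn⟩
          rw [h1]
          have h2 : Integrable (fun ω => C * (A n ω) ^ q) P := (hAq_int q).const_mul C
          have h3 : ∫ ω, ∑ k ∈ Finset.range n, (A n ω) ^ q * φ k ω ∂P ≤
              ∫ ω, C * (A n ω) ^ q ∂P := by
            refine integral_mono_ae ?_ h2 ?_
            · refine integrable_finset_sum _ fun k hk => ?_
              have hkn : k < n := Finset.mem_range.mp hk
              have : (fun ω => (A n ω) ^ q * φ k ω) = fun ω => (A n ω) ^ q * f ⟨k, hkn⟩ ω := by
                funext ω; simp [hφdef, dif_pos hkn]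
              rw [this]
              exact hprodf_int n ⟨k, hkn⟩
            · filter_upwards [hAbd] with ω hω
              calc ∑ k ∈ Finset.range n, (A n ω) ^ q * φ k ω
                  = (A n ω) ^ q * ∑ k ∈ Finset.range n, φ k ω := by rw [Finset.mul_sum]
                _ ≤ (A n ω) ^ q * C :=
                    mul_le_mul_of_nonneg_left (hφsum ω) (pow_nonneg (hω n).1 q)
                _ = C * (A n ω) ^ q := by ring
          calc ∫ ω, ∑ k ∈ Finset.range n, (A n ω) ^ q * φ k ω ∂P
              ≤ ∫ ω, C * (A n ω) ^ q ∂P := h3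
            _ = C * ∫ ω, (A n ω) ^ q ∂P := integral_const_mul C _
        -- combine
        have hcomb : ∑ k ∈ Finset.range n, ∫ ω, (A (k+1) ω) ^ q * G k ω ∂P ≤
            C * ∫ ω, (A n ω) ^ q ∂P := by
          refine le_trans (Finset.sum_le_sum (fun k hk => ?_)) step3
          have hkn : k < n := Finset.mem_range.mp hk
          have heq : (fun ω => (A n ω) ^ q * φ k ω) =
              fun ω => (A n ω) ^ q * f ⟨k, hkn⟩ ω := by
            funext ω; simp [hφdef, dif_pos hkn]
          calc ∫ ω, (A (k+1) ω) ^ q * G k ω ∂P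
              ≤ ∫ ω, (A n ω) ^ q * f ⟨k, hkn⟩ ω ∂P := step2 k hkn
            _ = ∫ ω, (A n ω) ^ q * φ k ω ∂P := by rw [heq]
        calc ∫ ω, (A n ω) ^ (q+1) ∂P
            ≤ (q+1 : ℝ) * ∑ k ∈ Finset.range n, ∫ ω, (A (k+1) ω) ^ q * G k ω ∂P := step1
          _ ≤ (q+1 : ℝ) * (C * ∫ ω, (A n ω) ^ q ∂P) := by
              refine mul_le_mul_of_nonneg_left hcomb ?_
              positivity
          _ ≤ (q+1 : ℝ) * (C * ((q.factorial : ℝ) * C ^ q)) := by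
              refine mul_le_mul_of_nonneg_left (mul_le_mul_of_nonneg_left ih hC) ?_
              positivity
          _ = ((q+1).factorial : ℝ) * C ^ (q+1) := by
              rw [Nat.factorial_succ]; push_cast; ring
  have hAn : ∀ ω, ∑ j : Fin n, g j ω = A n ω := by
    intro ω
    show _ = ∑ i ∈ Finset.range n, G i ω
    rw [← Fin.sum_univ_eq_sum_range (fun k => G k ω) n]
    exact Finset.sum_congr rfl fun j _ => by simp [hGdef, j.isLt]
  have hrw : ∫ ω, (∑ j : Fin n, g j ω) ^ p ∂P = ∫ ω, (A n ω) ^ p ∂P := by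
    simp_rw [hAn]
  exact hrw.trans_le (main p)


/-- Lemma 3.4, Eq. (3.15) of the paper. -/
theorem statement4
    {Ω : Type} [MeasurableSpace Ω] (P : Measure Ω) [IsProbabilityMeasure P]
    (N : ℕ → ℕ) (llo lhi : ℝ) (hllo : 0 < llo)
    (hratio : ∀ n : ℕ, 0 < n → llo ≤ (N n : ℝ) / (n : ℝ) ∧ (N n : ℝ) / (n : ℝ) ≤ lhi)
    (X : (n : ℕ) → Ω → Matrix (Fin (N n)) (Fin n) ℂ)
    (ν : Measure ℂ) [IsProbabilityMeasure ν]
    (hXmeas : ∀ n i j, Measurable fun ω => X n ω i j)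
    (hXdist : ∀ n i j, P.map (fun ω => X n ω i j) = ν)
    (hXindep : ∀ n, iIndepFun
      (fun (ij : Fin (N n) × Fin n) ω => X n ω ij.1 ij.2) P)
    (hmean : ∫ x, x ∂ν = 0) (hvar : ∫ x, ‖x‖ ^ 2 ∂ν = 1)
    (d : (n : ℕ) → Fin (N n) → ℝ) (dt : (n : ℕ) → Fin n → ℝ)
    (hd : ∀ n i, 0 ≤ d n i) (hdt : ∀ n j, 0 ≤ dt n j)
    (dmax dtmax dmin dtmin amax : ℝ)
    (hdmax : ∀ n i, d n i ≤ dmax) (hdtmax : ∀ n j, dt n j ≤ dtmax)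
    (hdmin : 0 < dmin) (hdtmin : 0 < dtmin)
    (hdminle : ∀ n : ℕ, 0 < n → dmin ≤ (∑ i, d n i) / (N n : ℝ))
    (hdtminle : ∀ n : ℕ, 0 < n → dtmin ≤ (∑ j, dt n j) / (n : ℝ))
    (A : (n : ℕ) → Matrix (Fin (N n)) (Fin n) ℂ)
    (hA : ∀ n, specNorm (A n) ≤ amax)
    (p : ℕ) (hp : 1 ≤ p) :
    ∃ K : ℝ, 0 < K ∧
      ∀ n : ℕ, 0 < n → ∀ u : Fin (N n) → ℂ, ∀ z : ℂ, z ∉ nonnegReal →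
        ∫ ω, (∑ j : Fin n,
            (P[fun ω' => ‖bform u (Qmat (Ymat (d n) (dt n) (X n ω') + A n) z)
                (fun i => (Ymat (d n) (dt n) (X n ω') + A n) i j)‖ ^ 2 |
                colSigma (fun ω => Ymat (d n) (dt n) (X n ω)) (j : ℕ)]) ω) ^ p ∂P ≤
          K * ‖z‖ ^ p * vecNorm u ^ (2 * p) / deltaz z ^ (2 * p) := by
  classical
  refine ⟨(p.factorial : ℝ) * 2 ^ p, by positivity, ?_⟩
  intro n hn u z hz
  set Y : Ω → Matrix (Fin (N n)) (Fin n) ℂ := fun ω => Ymat (d n) (dt n) (X n ω) with hYdef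
  set Smap : Ω → Matrix (Fin (N n)) (Fin n) ℂ := fun ω => Y ω + A n with hSdef
  have hSmeas : ∀ i j, Measurable fun ω => Smap ω i j := by
    intro i j
    have h1 : (fun ω => Smap ω i j) = fun ω =>
        ((Real.sqrt (d n i) * Real.sqrt (dt n j) / Real.sqrt (n : ℝ) : ℝ) : ℂ) * X n ω i j
          + A n i j := by
      funext ω
      simp [hSdef, hYdef, Ymat, Matrix.add_apply]
    rw [h1]
    exact (measurable_const.mul (hXmeas n i j)).add measurable_const
  set f : Fin n → Ω → ℝ := fun j ω =>
    ‖bform u (Qmat (Smap ω) z) (fun i => Smap ω i j)‖ ^ 2 with hfdef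
  have hfm : ∀ j, Measurable (f j) := fun j => measurable_bform hSmeas u z j
  have hfnn : ∀ j ω, 0 ≤ f j ω := fun j ω => pow_nonneg (norm_nonneg _) 2
  set C : ℝ := 2 * ‖z‖ * vecNorm u ^ 2 / deltaz z ^ 2 with hCdef
  have hδ : 0 < deltaz z := deltaz_pos hz
  have hC : 0 ≤ C := by
    rw [hCdef]
    have h1 : (0:ℝ) ≤ ‖z‖ := norm_nonneg _
    have h2 : (0:ℝ) ≤ vecNorm u ^ 2 := sq_nonneg _
    positivity
  have hsum : ∀ ω, ∑ j, f j ω ≤ C := fun ω => key_bound (Smap ω) u z hz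
  set F : Fin n → MeasurableSpace Ω := fun j => colSigma Y (j : ℕ) with hFdef
  have hYcolmeas : ∀ ℓ : Fin n, Measurable fun ω => (fun i => Y ω i ℓ) := by
    intro ℓ
    refine measurable_pi_lambda _ fun i => ?_
    have h1 : (fun ω => Y ω i ℓ) = fun ω =>
        ((Real.sqrt (d n i) * Real.sqrt (dt n ℓ) / Real.sqrt (n : ℝ) : ℝ) : ℂ) * X n ω i ℓ := by
      funext ω; simp [hYdef, Ymat]
    rw [h1]
    exact measurable_const.mul (hXmeas n i ℓ)
  have hFle : ∀ j, F j ≤ (inferInstance : MeasurableSpace Ω) := by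
    intro j
    refine iSup_le fun ℓ => iSup_le fun _ => ?_
    exact MeasurableSpace.comap_le_iff_le_map.mpr ((hYcolmeas ℓ).le_map)
  have hFmono : ∀ j k : Fin n, j ≤ k → F j ≤ F k := by
    intro j k hjk
    refine iSup_le fun ℓ => iSup_le fun hlt => ?_
    have hlt2 : (ℓ : ℕ) < (k : ℕ) := lt_of_lt_of_le hlt hjk
    exact le_iSup_of_le ℓ (le_iSup_of_le hlt2 le_rfl)
  have hgar := garsia P F hFle hFmono f hfm hfnn C hC hsum p
  have hfin : (p.factorial : ℝ) * C ^ p =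
      (p.factorial : ℝ) * 2 ^ p * ‖z‖ ^ p * vecNorm u ^ (2 * p) / deltaz z ^ (2 * p) := by
    rw [hCdef, div_pow, mul_pow, mul_pow, pow_mul, pow_mul]
    ring
  calc ∫ ω, (∑ j : Fin n, (P[f j | F j]) ω) ^ p ∂P
      ≤ (p.factorial : ℝ) * C ^ p := hgar
    _ = (p.factorial : ℝ) * 2 ^ p * ‖z‖ ^ p *
          vecNorm u ^ (2 * p) / deltaz z ^ (2 * p) := hfin
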